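/- arXiv:2410.10984 — 4 statements merged into one kernel-verified Lean document; each statement's English description precedes it below -/
import Mathlib

section
/- Let φ : ℝ → ℝ be 1-Lipschitz and let Ω denote its entrywise application to matrices. Let Y, Z ∈ ℝ^{m×d} with Ω(Y) = Y, and let A* ∈ ℝ^{m×m} be a least-squares minimizer of A ↦ ‖Y − A Z‖_F. Then ‖Y − Ω(A* Z)‖_F ≤ ‖Y − Z‖_F. (Single-step version of Theorem 1: applying one YES-0 layer does not increase the Frobenius distance to the target.) -/
/-- The Frobenius norm of a real `m × d` matrix. -/
noncomputable def frobNorm {m d : ℕ} (M : Matrix (Fin m) (Fin d) ℝ) : ℝ :=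
  Real.sqrt (∑ i, ∑ j, (M i j) ^ 2)

/-- Single-step version of Theorem 1: applying one YES-0 layer (least-squares
projection followed by a 1-Lipschitz activation fixing the target `Y`) does not
increase the Frobenius distance to the target. -/
theorem yes0_single_step {m d : ℕ} (φ : ℝ → ℝ)
    (hφ : ∀ a b : ℝ, |φ a - φ b| ≤ |a - b|)
    (Y Z : Matrix (Fin m) (Fin d) ℝ) (hY : Y.map φ = Y)
    (Astar : Matrix (Fin m) (Fin m) ℝ)
    (hAstar : ∀ A : Matrix (Fin m) (Fin m) ℝ,
      frobNorm (Y - Astar * Z) ≤ frobNorm (Y - A * Z)) :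
    frobNorm (Y - (Astar * Z).map φ) ≤ frobNorm (Y - Z) := by
  have h1 : frobNorm (Y - (Astar * Z).map φ) ≤ frobNorm (Y - Astar * Z) := by
    unfold frobNorm
    apply Real.sqrt_le_sqrt
    apply Finset.sum_le_sum; intro i _
    apply Finset.sum_le_sum; intro j _
    have := hφ (Y i j) ((Astar * Z) i j)
    have hYij : φ (Y i j) = Y i j := by
      have := congrFun (congrFun hY i) j
      simpa [Matrix.map_apply] using this
    have hb : |(Y - (Astar * Z).map φ) i j| ≤ |(Y - Astar * Z) i j| := by
      simp only [Matrix.sub_apply, Matrix.map_apply]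
      calc |Y i j - φ ((Astar * Z) i j)| = |φ (Y i j) - φ ((Astar * Z) i j)| := by rw [hYij]
        _ ≤ |Y i j - (Astar * Z) i j| := hφ _ _
    calc ((Y - (Astar * Z).map φ) i j) ^ 2 = |(Y - (Astar * Z).map φ) i j| ^ 2 := (sq_abs _).symm
      _ ≤ |(Y - Astar * Z) i j| ^ 2 := by
          exact pow_le_pow_left₀ (abs_nonneg _) hb 2
      _ = ((Y - Astar * Z) i j) ^ 2 := sq_abs _
  have h2 : frobNorm (Y - Astar * Z) ≤ frobNorm (Y - Z) := by
    have := hAstar 1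
    simpa using this
  linarith
end

section
/- (Theorem 1: monotonicity of the YES-0 bound.) Let φ : ℝ → ℝ be 1-Lipschitz and let Ω denote its entrywise application to matrices. Let Y ∈ ℝ^{m×d} satisfy Ω(Y) = Y. Let (Y_k)_{k≥2} be a sequence in ℝ^{m×d} such that for each k, Y_{k+1} = Ω(A_k Y_k) where A_k ∈ ℝ^{m×m} is a least-squares minimizer of A ↦ ‖Y − A Y_k‖_F. Then for every k ≥ 2, ‖Y − Y_{k+1}‖_F² ≤ ‖Y − Y_k‖_F², i.e. the YES-0 per-layer error is monotonically nonincreasing in the depth of the network. -/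
lemma frobNorm_sq {m d : ℕ} (M : Matrix (Fin m) (Fin d) ℝ) :
    (frobNorm M) ^ 2 = ∑ i, ∑ j, (M i j) ^ 2 := by
  unfold frobNorm
  rw [Real.sq_sqrt]
  positivity

lemma frobNorm_nonneg {m d : ℕ} (M : Matrix (Fin m) (Fin d) ℝ) :
    0 ≤ frobNorm M := Real.sqrt_nonneg _

/-- Theorem 1 (monotonicity of the YES-0 bound): if the activation `φ` is
1-Lipschitz and fixes the target `Y` entrywise, and the sequence `Yk` is
generated by `Y_{k+1} = Ω(A_k Y_k)` with `A_k` a least-squares minimizer of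
`A ↦ ‖Y − A Y_k‖_F`, then the per-layer squared Frobenius error is
monotonically nonincreasing in the depth. -/
theorem yes0_monotone {m d : ℕ} (φ : ℝ → ℝ)
    (hφ : ∀ a b : ℝ, |φ a - φ b| ≤ |a - b|)
    (Y : Matrix (Fin m) (Fin d) ℝ) (hY : Y.map φ = Y)
    (Yk : ℕ → Matrix (Fin m) (Fin d) ℝ)
    (Ak : ℕ → Matrix (Fin m) (Fin m) ℝ)
    (hAk : ∀ k ≥ 2, ∀ A : Matrix (Fin m) (Fin m) ℝ,
      frobNorm (Y - Ak k * Yk k) ≤ frobNorm (Y - A * Yk k))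
    (hYk : ∀ k ≥ 2, Yk (k + 1) = (Ak k * Yk k).map φ) :
    ∀ k ≥ 2, (frobNorm (Y - Yk (k + 1))) ^ 2 ≤ (frobNorm (Y - Yk k)) ^ 2 := by
  intro k hk
  have h1 : (frobNorm (Y - Yk (k + 1))) ^ 2 ≤ (frobNorm (Y - Ak k * Yk k)) ^ 2 := by
    rw [frobNorm_sq, frobNorm_sq, hYk k hk]
    apply Finset.sum_le_sum
    intro i _
    apply Finset.sum_le_sum
    intro j _
    rw [← sq_abs ((Y - (Ak k * Yk k).map φ) i j), ← sq_abs ((Y - Ak k * Yk k) i j)]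
    apply pow_le_pow_left₀ (abs_nonneg _) _
    simp only [Matrix.sub_apply, Matrix.map_apply]
    calc |Y i j - φ ((Ak k * Yk k) i j)|
        = |φ (Y i j) - φ ((Ak k * Yk k) i j)| := by
          conv_lhs => rw [show Y i j = φ (Y i j) from by
            conv_lhs => rw [← hY, Matrix.map_apply]]
      _ ≤ |Y i j - (Ak k * Yk k) i j| := hφ _ _
  have h2 : frobNorm (Y - Ak k * Yk k) ≤ frobNorm (Y - Yk k) := by
    have := hAk k hk 1
    rwa [Matrix.one_mul] at this
  exact h1.trans (pow_le_pow_left₀ (frobNorm_nonneg _) h2 2)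
end

section
/- (ReLU instance of Theorem 1.) Let [·]_+ denote the entrywise ReLU map M ↦ max(M_{i,j}, 0). Let Y ∈ ℝ^{m×d} have all entries nonnegative. Let (Y_k)_{k≥2} be a sequence in ℝ^{m×d} with Y_{k+1} = [A_k Y_k]_+, where A_k ∈ ℝ^{m×m} is a least-squares minimizer of A ↦ ‖Y − A Y_k‖_F. Then for every k ≥ 2, ‖Y − Y_{k+1}‖_F² ≤ ‖Y − Y_k‖_F². -/
/-- The entrywise ReLU of a matrix. -/
def reluMat {m d : ℕ} (M : Matrix (Fin m) (Fin d) ℝ) : Matrix (Fin m) (Fin d) ℝ :=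
  M.map (fun x => max x 0)

/-- ReLU instance of Theorem 1: if the target `Y` is entrywise nonnegative and
the sequence `Yk` is generated by `Y_{k+1} = [A_k Y_k]_+` with `A_k` a
least-squares minimizer of `A ↦ ‖Y − A Y_k‖_F`, then the per-layer squared
Frobenius error is monotonically nonincreasing. -/
theorem yes0_monotone_relu {m d : ℕ}
    (Y : Matrix (Fin m) (Fin d) ℝ) (hY : ∀ i j, 0 ≤ Y i j)
    (Yk : ℕ → Matrix (Fin m) (Fin d) ℝ)
    (Ak : ℕ → Matrix (Fin m) (Fin m) ℝ)
    (hAk : ∀ k ≥ 2, ∀ A : Matrix (Fin m) (Fin m) ℝ,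
      frobNorm (Y - Ak k * Yk k) ≤ frobNorm (Y - A * Yk k))
    (hYk : ∀ k ≥ 2, Yk (k + 1) = reluMat (Ak k * Yk k)) :
    ∀ k ≥ 2, (frobNorm (Y - Yk (k + 1))) ^ 2 ≤ (frobNorm (Y - Yk k)) ^ 2 := by
  intro k hk
  have h1 : (frobNorm (Y - Yk (k + 1))) ^ 2 ≤ (frobNorm (Y - Ak k * Yk k)) ^ 2 := by
    rw [hYk k hk, frobNorm_sq, frobNorm_sq]
    apply Finset.sum_le_sum
    intro i _
    apply Finset.sum_le_sum
    intro j _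
    simp only [Matrix.sub_apply, reluMat, Matrix.map_apply]
    set x := (Ak k * Yk k) i j
    rcases le_or_gt 0 x with hx | hx
    · rw [max_eq_left hx]
    · rw [max_eq_right hx.le]
      have hy := hY i j
      have : Y i j ≤ Y i j - x := by linarith
      nlinarith
  have h2 : frobNorm (Y - Ak k * Yk k) ≤ frobNorm (Y - Yk k) := by
    have := hAk k hk 1
    simpa using this
  calc (frobNorm (Y - Yk (k + 1))) ^ 2 ≤ (frobNorm (Y - Ak k * Yk k)) ^ 2 := h1
    _ ≤ (frobNorm (Y - Yk k)) ^ 2 := by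
        apply pow_le_pow_left₀ (frobNorm_nonneg _) h2
end

section
/- (The YES-0 bound of a deep network is at most any single-layer linear error.) Let φ : ℝ → ℝ be 1-Lipschitz and let Ω denote its entrywise application to matrices. Let X ∈ ℝ^{n×d}, Y ∈ ℝ^{m×d} with Ω(Y) = Y. Define Y₁ = X and, for k = 1, …, K, Y_{k+1} = Ω(A_k Y_k), where A₁ ∈ ℝ^{m×n} is a least-squares minimizer of A ↦ ‖Y − A X‖_F and, for k ≥ 2, A_k ∈ ℝ^{m×m} is a least-squares minimizer of A ↦ ‖Y − A Y_k‖_F. Then for every matrix A ∈ ℝ^{m×n}, ‖Y − Y_{K+1}‖_F² ≤ ‖Y − A X‖_F². -/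
lemma frobNorm_map_le {m d : ℕ} (φ : ℝ → ℝ)
    (hφ : ∀ a b : ℝ, |φ a - φ b| ≤ |a - b|)
    (Y M : Matrix (Fin m) (Fin d) ℝ) (hY : Y.map φ = Y) :
    frobNorm (Y - M.map φ) ≤ frobNorm (Y - M) := by
  unfold frobNorm
  apply Real.sqrt_le_sqrt
  apply Finset.sum_le_sum
  intro i _
  apply Finset.sum_le_sum
  intro j _
  have hYij : φ (Y i j) = Y i j := by
    have := congrFun (congrFun hY i) j
    simpa [Matrix.map_apply] using this
  have h := hφ (Y i j) (M i j)
  rw [hYij] at h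
  simp only [Matrix.sub_apply, Matrix.map_apply]
  rw [← sq_abs (Y i j - φ (M i j)), ← sq_abs (Y i j - M i j)]
  exact pow_le_pow_left₀ (abs_nonneg _) h 2

/-- The YES-0 bound of a deep network is at most any single-layer linear error.
Here `Ys k` denotes the YES-0 output `Y_k` of layer `k - 1` (so `Ys 2 = Ω(A₁ X)`
with `Y₁ = X`), `A1` is a least-squares minimizer of `A ↦ ‖Y − A X‖_F`, and for
`k ≥ 2` the weight `Ak k` is a least-squares minimizer of `A ↦ ‖Y − A Y_k‖_F`.
Then the final YES-0 error after `K ≥ 1` layers is at most the linear error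
`‖Y − A X‖_F²` for every `A ∈ ℝ^{m×n}`. -/
theorem yes0_le_linear {m n d : ℕ} (φ : ℝ → ℝ)
    (hφ : ∀ a b : ℝ, |φ a - φ b| ≤ |a - b|)
    (X : Matrix (Fin n) (Fin d) ℝ) (Y : Matrix (Fin m) (Fin d) ℝ)
    (hY : Y.map φ = Y)
    (K : ℕ) (hK : 1 ≤ K)
    (A1 : Matrix (Fin m) (Fin n) ℝ)
    (hA1 : ∀ A : Matrix (Fin m) (Fin n) ℝ,
      frobNorm (Y - A1 * X) ≤ frobNorm (Y - A * X))
    (Ys : ℕ → Matrix (Fin m) (Fin d) ℝ)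
    (hY2 : Ys 2 = (A1 * X).map φ)
    (Ak : ℕ → Matrix (Fin m) (Fin m) ℝ)
    (hAk : ∀ k ≥ 2, ∀ A : Matrix (Fin m) (Fin m) ℝ,
      frobNorm (Y - Ak k * Ys k) ≤ frobNorm (Y - A * Ys k))
    (hYs : ∀ k ≥ 2, Ys (k + 1) = (Ak k * Ys k).map φ) :
    ∀ A : Matrix (Fin m) (Fin n) ℝ,
      (frobNorm (Y - Ys (K + 1))) ^ 2 ≤ (frobNorm (Y - A * X)) ^ 2 := by
  intro A
  have key : ∀ k, 1 ≤ k → frobNorm (Y - Ys (k + 1)) ≤ frobNorm (Y - A1 * X) := by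
    intro k hk
    induction k with
    | zero => omega
    | succ p ih =>
      rcases Nat.eq_or_lt_of_le hk with h1 | h1
      · -- p + 1 = 1, so k = 1, Ys 2
        have hp : p = 0 := by omega
        subst hp
        rw [hY2]
        exact frobNorm_map_le φ hφ Y _ hY
      · have hp : 1 ≤ p := by omega
        have hp2 : p + 1 ≥ 2 := by omega
        rw [hYs (p + 1) hp2]
        calc frobNorm (Y - (Ak (p + 1) * Ys (p + 1)).map φ)
            ≤ frobNorm (Y - Ak (p + 1) * Ys (p + 1)) := frobNorm_map_le φ hφ Y _ hY
          _ ≤ frobNorm (Y - 1 * Ys (p + 1)) := hAk (p + 1) hp2 1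
          _ = frobNorm (Y - Ys (p + 1)) := by rw [Matrix.one_mul]
          _ ≤ frobNorm (Y - A1 * X) := ih hp
  have h := (key K hK).trans (hA1 A)
  exact pow_le_pow_left₀ (frobNorm_nonneg _) h 2
end
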